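/- arXiv:2212.07297 — 2 statements merged into one kernel-verified Lean document; each statement's English description precedes it below -/
import Mathlib

section
/- Let T be a rooted tree. Let (u,v) be a crossing edge (i.e., neither u nor v is an ancestor of the other in T), let w = LCA(u,v), and let beta = min(depth(u), depth(v)) - depth(w). If x is a vertex with tree-distance dist(u,x) ≤ beta and y is a vertex with tree-distance dist(v,y) ≤ beta, and x ≠ y, then LCA(x,y) = w. -/
/-- A finite rooted tree, given by a parent function. `depth v` is the number of
edges on the path from the root to `v`. -/
structure RTree (V : Type*) where
  root : V
  parent : V → V
  parent_root : parent root = root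
  depth : V → ℕ
  depth_root : depth root = 0
  depth_parent : ∀ v, v ≠ root → depth v = depth (parent v) + 1
  reaches_root : ∀ v, ∃ k, parent^[k] v = root

namespace RTree

variable {V : Type*}

/-- `a` is an ancestor of `b` (every vertex is an ancestor of itself). -/
def Ancestor (T : RTree V) (a b : V) : Prop := ∃ k, T.parent^[k] b = a

/-- Tree-path distance: graph distance in the undirected tree. -/
noncomputable def dist (T : RTree V) (a b : V) : ℕ :=
  (SimpleGraph.fromRel (fun x y => T.parent x = y ∧ x ≠ y)).dist a b

/-- `w` is the lowest common ancestor of `u` and `v`. -/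
def IsLCA (T : RTree V) (w u v : V) : Prop :=
  T.Ancestor w u ∧ T.Ancestor w v ∧
    ∀ d, T.Ancestor d u → T.Ancestor d v → T.depth d ≤ T.depth w

/-- `(u,v)` is a crossing edge: neither endpoint is an ancestor of the other. -/
def Crossing (T : RTree V) (u v : V) : Prop :=
  ¬ T.Ancestor u v ∧ ¬ T.Ancestor v u

/-- `c` is a child of `w`. -/
def IsChildOf (T : RTree V) (c w : V) : Prop := T.parent c = w ∧ c ≠ w

/-- Edge `(x,y)` is covered by edge `(u,v)` with radius `beta`. -/
def Covers (T : RTree V) (beta : ℕ) (u v x y : V) : Prop :=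
  (T.dist u x ≤ beta ∧ T.dist v y ≤ beta) ∨ (T.dist u y ≤ beta ∧ T.dist v x ≤ beta)

end RTree

namespace RTree

variable {V : Type*} (T : RTree V)

lemma root_of_depth_eq_zero {v : V} (h : T.depth v = 0) : v = T.root := by
  by_contra hv
  have := T.depth_parent v hv
  omega

lemma iterate_root (k : ℕ) : T.parent^[k] T.root = T.root :=
  Function.iterate_fixed T.parent_root k

lemma iterate_depth_eq_root : ∀ (n : ℕ) (v : V), T.depth v = n → T.parent^[n] v = T.root := by
  intro n
  induction n with
  | zero => intro v h; simpa using T.root_of_depth_eq_zero h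
  | succ n ih =>
    intro v h
    have hv : v ≠ T.root := by
      intro e; rw [e, T.depth_root] at h; omega
    have hp : T.depth (T.parent v) = n := by
      have := T.depth_parent v hv; omega
    rw [Function.iterate_succ_apply]
    exact ih _ hp

lemma iterate_full (v : V) : T.parent^[T.depth v] v = T.root :=
  T.iterate_depth_eq_root _ v rfl

lemma depth_iterate (v : V) : ∀ k, k ≤ T.depth v → T.depth (T.parent^[k] v) = T.depth v - k := by
  intro k
  induction k with
  | zero => simp
  | succ k ih =>
    intro hk
    have h1 : T.depth (T.parent^[k] v) = T.depth v - k := ih (by omega)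
    have hne : T.parent^[k] v ≠ T.root := by
      intro e; rw [e, T.depth_root] at h1; omega
    have := T.depth_parent _ hne
    rw [Function.iterate_succ_apply']
    omega

/-- Ancestor normalization. -/
lemma ancestor_norm {a b : V} (h : T.Ancestor a b) :
    T.depth a ≤ T.depth b ∧ T.parent^[T.depth b - T.depth a] b = a := by
  obtain ⟨k, hk⟩ := h
  by_cases hle : k ≤ T.depth b
  · have hd := T.depth_iterate b k hle
    rw [hk] at hd
    constructor
    · omega
    · have : T.depth b - T.depth a = k := by omega
      rw [this, hk]
  · have hb : T.parent^[k] b = T.root := by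
      have : k = (k - T.depth b) + T.depth b := by omega
      rw [this, Function.iterate_add_apply, T.iterate_full, T.iterate_root]
    have ha : a = T.root := by rw [← hk, hb]
    subst ha
    refine ⟨by rw [T.depth_root]; omega, ?_⟩
    rw [T.depth_root]
    simpa using T.iterate_full b

lemma ancestor_depth_le {a b : V} (h : T.Ancestor a b) : T.depth a ≤ T.depth b :=
  (T.ancestor_norm h).1

lemma ancestor_refl (a : V) : T.Ancestor a a := ⟨0, rfl⟩

lemma ancestor_trans {a b c : V} (h1 : T.Ancestor a b) (h2 : T.Ancestor b c) :
    T.Ancestor a c := by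
  obtain ⟨j, hj⟩ := h1
  obtain ⟨k, hk⟩ := h2
  exact ⟨j + k, by rw [Function.iterate_add_apply, hk, hj]⟩

/-- Uniqueness of ancestors at a given depth. -/
lemma ancestor_unique {a a' b : V} (h : T.Ancestor a b) (h' : T.Ancestor a' b)
    (hd : T.depth a = T.depth a') : a = a' := by
  have n1 := T.ancestor_norm h
  have n2 := T.ancestor_norm h'
  rw [← n1.2, ← n2.2, hd]

/-- Ancestors of a common vertex are comparable. -/
lemma ancestor_comparable {a b c : V} (h1 : T.Ancestor a c) (h2 : T.Ancestor b c)
    (hd : T.depth a ≤ T.depth b) : T.Ancestor a b := by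
  have n1 := T.ancestor_norm h1
  have n2 := T.ancestor_norm h2
  refine ⟨T.depth b - T.depth a, ?_⟩
  have h3 : T.depth b - T.depth a + (T.depth c - T.depth b) = T.depth c - T.depth a := by omega
  calc T.parent^[T.depth b - T.depth a] b
      = T.parent^[T.depth b - T.depth a] (T.parent^[T.depth c - T.depth b] c) := by rw [n2.2]
    _ = T.parent^[T.depth b - T.depth a + (T.depth c - T.depth b)] c :=
        (Function.iterate_add_apply _ _ _ _).symm
    _ = T.parent^[T.depth c - T.depth a] c := by rw [h3]
    _ = a := n1.2

/-- The underlying simple graph. -/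
noncomputable def G (T : RTree V) : SimpleGraph V :=
  SimpleGraph.fromRel (fun x y => T.parent x = y ∧ x ≠ y)

lemma reach_root : ∀ (n : ℕ) (v : V), T.depth v = n → T.G.Reachable v T.root := by
  intro n
  induction n with
  | zero => intro v h; rw [T.root_of_depth_eq_zero h]
  | succ n ih =>
    intro v h
    have hv : v ≠ T.root := by intro e; rw [e, T.depth_root] at h; omega
    have hvp : v ≠ T.parent v := by
      intro e
      have := T.depth_parent v hv
      rw [← e] at this; omega
    have hadj : T.G.Adj v (T.parent v) := by
      rw [G, SimpleGraph.fromRel_adj]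
      exact ⟨hvp, Or.inl ⟨rfl, hvp⟩⟩
    have hp : T.depth (T.parent v) = n := by have := T.depth_parent v hv; omega
    exact (hadj.reachable).trans (ih _ hp)

lemma reachable (a b : V) : T.G.Reachable a b :=
  (T.reach_root _ a rfl).trans (T.reach_root _ b rfl).symm

/-- Along any walk, there is a common ancestor witnessing the depth bound. -/
lemma walk_lca {a b : V} (p : T.G.Walk a b) :
    ∃ m, T.Ancestor m a ∧ T.Ancestor m b ∧
      (T.depth a - T.depth m) + (T.depth b - T.depth m) ≤ p.length := by
  induction p with
  | nil => exact ⟨_, T.ancestor_refl _, T.ancestor_refl _, by omega⟩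
  | @cons a a' b h p ih =>
    obtain ⟨m, hma', hmb, hlen⟩ := ih
    rw [G, SimpleGraph.fromRel_adj] at h
    obtain ⟨hne, hrel⟩ := h
    have hdm1 := T.ancestor_depth_le hma'
    have hdm2 := T.ancestor_depth_le hmb
    rcases hrel with ⟨hpa, -⟩ | ⟨hpa, -⟩
    · -- parent a = a' : going up
      have hna : a ≠ T.root := by
        intro e; rw [e, T.parent_root] at hpa; exact hne (e.trans hpa)
      have hda : T.depth a = T.depth a' + 1 := by
        have := T.depth_parent a hna; rw [hpa] at this; exact this
      have hma : T.Ancestor m a := by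
        obtain ⟨k, hk⟩ := hma'
        exact ⟨k + 1, by rw [Function.iterate_add_apply]; simpa [hpa] using hk⟩
      exact ⟨m, hma, hmb, by simp [SimpleGraph.Walk.length_cons]; omega⟩
    · -- parent a' = a : going down
      have hna' : a' ≠ T.root := by
        intro e; rw [e, T.parent_root] at hpa; exact hne (hpa.symm.trans e.symm)
      have hda' : T.depth a' = T.depth a + 1 := by
        have := T.depth_parent a' hna'; rw [hpa] at this; exact this
      have haa' : T.Ancestor a a' := ⟨1, by simpa using hpa⟩
      by_cases hc : T.depth m ≤ T.depth a
      · have hma : T.Ancestor m a := T.ancestor_comparable hma' haa' hc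
        exact ⟨m, hma, hmb, by simp [SimpleGraph.Walk.length_cons]; omega⟩
      · -- depth m = depth a', so m = a'
        have hdm : T.depth m = T.depth a' := by omega
        have hma'' : m = a' := T.ancestor_unique hma' (T.ancestor_refl a') hdm
        subst hma''
        have hab : T.Ancestor a b := T.ancestor_trans haa' hmb
        refine ⟨a, T.ancestor_refl a, hab, ?_⟩
        have hdab := T.ancestor_depth_le hab
        simp [SimpleGraph.Walk.length_cons]
        omega

/-- Distance lower bound via a common ancestor. -/
lemma dist_lca (a b : V) :
    ∃ m, T.Ancestor m a ∧ T.Ancestor m b ∧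
      (T.depth a - T.depth m) + (T.depth b - T.depth m) ≤ T.dist a b := by
  obtain ⟨p, hp⟩ := (T.reachable a b).exists_walk_length_eq_dist
  obtain ⟨m, h1, h2, h3⟩ := T.walk_lca p
  have hd : T.dist a b = T.G.dist a b := rfl
  exact ⟨m, h1, h2, by rw [hd, ← hp]; exact h3⟩

end RTree

/-- Lemma 1: for a crossing edge `(u,v)` with LCA `w` and
`beta = min(depth u, depth v) - depth w`, any edge `(x,y)` with
`dist u x ≤ beta`, `dist v y ≤ beta` and `x ≠ y` has LCA `w`. -/
theorem stmt0 {V : Type*} [Fintype V] [DecidableEq V] (T : RTree V)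
    (u v w x y : V)
    (hcross : T.Crossing u v) (hlca : T.IsLCA w u v)
    (beta : ℕ) (hbeta : beta = min (T.depth u) (T.depth v) - T.depth w)
    (hx : T.dist u x ≤ beta) (hy : T.dist v y ≤ beta) (hxy : x ≠ y) :
    T.IsLCA w x y := by
  obtain ⟨hwu, hwv, hmax⟩ := hlca
  have hdwu : T.depth w ≤ T.depth u := T.ancestor_depth_le hwu
  have hdwv : T.depth w ≤ T.depth v := T.ancestor_depth_le hwv
  have huw : u ≠ w := by
    rintro rfl; exact hcross.1 hwv
  have hvw : v ≠ w := by
    rintro rfl; exact hcross.2 hwu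
  have hdwu' : T.depth w < T.depth u := by
    rcases lt_or_eq_of_le hdwu with h | h
    · exact h
    · exact absurd (T.ancestor_unique (T.ancestor_refl u) hwu h.symm) huw
  have hdwv' : T.depth w < T.depth v := by
    rcases lt_or_eq_of_le hdwv with h | h
    · exact h
    · exact absurd (T.ancestor_unique (T.ancestor_refl v) hwv h.symm) hvw
  have hbu : beta ≤ T.depth u - T.depth w := by omega
  have hbv : beta ≤ T.depth v - T.depth w := by omega
  -- the child of w towards u
  set cu := T.parent^[T.depth u - T.depth w - 1] u with hcu_def
  have hcu_anc : T.Ancestor cu u := ⟨_, rfl⟩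
  have hcu_depth : T.depth cu = T.depth w + 1 := by
    have := T.depth_iterate u (T.depth u - T.depth w - 1) (by omega)
    rw [← hcu_def] at this; omega
  have hwcu : T.Ancestor w cu := by
    have h0 := (T.ancestor_norm hwu).2
    have h1 : T.depth u - T.depth w = (T.depth u - T.depth w - 1) + 1 := by omega
    rw [h1, Function.iterate_succ_apply'] at h0
    exact ⟨1, by simpa [hcu_def] using h0⟩
  -- the child of w towards v
  set cv := T.parent^[T.depth v - T.depth w - 1] v with hcv_def
  have hcv_anc : T.Ancestor cv v := ⟨_, rfl⟩
  have hcv_depth : T.depth cv = T.depth w + 1 := by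
    have := T.depth_iterate v (T.depth v - T.depth w - 1) (by omega)
    rw [← hcv_def] at this; omega
  have hwcv : T.Ancestor w cv := by
    have h0 := (T.ancestor_norm hwv).2
    have h1 : T.depth v - T.depth w = (T.depth v - T.depth w - 1) + 1 := by omega
    rw [h1, Function.iterate_succ_apply'] at h0
    exact ⟨1, by simpa [hcv_def] using h0⟩
  have hcucv : cu ≠ cv := by
    intro e
    rw [← e] at hcv_anc
    have := hmax cu hcu_anc hcv_anc
    omega
  -- claim about x
  have claimX : T.Ancestor w x ∧ (x = w ∨ T.Ancestor cu x) := by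
    obtain ⟨m, hmu, hmx, hlen⟩ := T.dist_lca u x
    have hdm : T.depth m ≤ T.depth u := T.ancestor_depth_le hmu
    have hdmx : T.depth m ≤ T.depth x := T.ancestor_depth_le hmx
    have hdist : (T.depth u - T.depth m) + (T.depth x - T.depth m) ≤ T.depth u - T.depth w :=
      le_trans hlen (le_trans hx hbu)
    have hdmw : T.depth w ≤ T.depth m := by omega
    have hwm : T.Ancestor w m := T.ancestor_comparable hwu hmu hdmw
    have hwx : T.Ancestor w x := T.ancestor_trans hwm hmx
    refine ⟨hwx, ?_⟩
    rcases eq_or_lt_of_le hdmw with h | h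
    · -- m = w, hence x = w
      have hmw : m = w := T.ancestor_unique hmu hwu h.symm
      left
      rw [hmw] at hdist
      have hwxd : T.depth w ≤ T.depth x := T.ancestor_depth_le hwx
      have hdx : T.depth x = T.depth w := by omega
      exact (T.ancestor_unique hwx (T.ancestor_refl x) hdx.symm).symm
    · right
      have hcum : T.Ancestor cu m := T.ancestor_comparable hcu_anc hmu (by omega)
      exact T.ancestor_trans hcum hmx
  -- claim about y
  have claimY : T.Ancestor w y ∧ (y = w ∨ T.Ancestor cv y) := by
    obtain ⟨m, hmv, hmy, hlen⟩ := T.dist_lca v y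
    have hdm : T.depth m ≤ T.depth v := T.ancestor_depth_le hmv
    have hdmy : T.depth m ≤ T.depth y := T.ancestor_depth_le hmy
    have hdist : (T.depth v - T.depth m) + (T.depth y - T.depth m) ≤ T.depth v - T.depth w :=
      le_trans hlen (le_trans hy hbv)
    have hdmw : T.depth w ≤ T.depth m := by omega
    have hwm : T.Ancestor w m := T.ancestor_comparable hwv hmv hdmw
    have hwy : T.Ancestor w y := T.ancestor_trans hwm hmy
    refine ⟨hwy, ?_⟩
    rcases eq_or_lt_of_le hdmw with h | h
    · have hmw : m = w := T.ancestor_unique hmv hwv h.symm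
      left
      rw [hmw] at hdist
      have hwyd : T.depth w ≤ T.depth y := T.ancestor_depth_le hwy
      have hdy : T.depth y = T.depth w := by omega
      exact (T.ancestor_unique hwy (T.ancestor_refl y) hdy.symm).symm
    · right
      have hcvm : T.Ancestor cv m := T.ancestor_comparable hcv_anc hmv (by omega)
      exact T.ancestor_trans hcvm hmy
  refine ⟨claimX.1, claimY.1, ?_⟩
  intro d hdx hdy
  by_contra hcon
  push_neg at hcon
  have hdd : T.depth w + 1 ≤ T.depth d := hcon
  have hxne : x ≠ w := by
    rintro rfl
    exact absurd (T.ancestor_depth_le hdx) (by omega)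
  have hyne : y ≠ w := by
    rintro rfl
    exact absurd (T.ancestor_depth_le hdy) (by omega)
  have hcux : T.Ancestor cu x := (claimX.2).resolve_left hxne
  have hcvy : T.Ancestor cv y := (claimY.2).resolve_left hyne
  have hcud : T.Ancestor cu d := T.ancestor_comparable hcux hdx (by omega)
  have hcvd : T.Ancestor cv d := T.ancestor_comparable hcvy hdy (by omega)
  exact hcucv (T.ancestor_unique hcud hcvd (by omega))
end

section
/- Radix sort is stable and correct: sorting a list of natural numbers less than 2^64 by performing eight successive stable sorts keyed on the k-th byte (k = 0,...,7, least significant first) produces the list sorted in nondecreasing order. -/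
/-!
A stable sort on a key `f` of a list that is already ordered by `r` leaves it ordered
lexicographically by `(f, r)`: stability means that the elements of any fixed key keep their
relative order. Starting from the trivial order modulo `256 ^ 0`, the pass on byte `k` therefore
turns order modulo `256 ^ k` into order modulo `256 ^ (k + 1)`, since byte `k` is the leading
digit of `n % 256 ^ (k + 1)`. After eight passes the list is ordered modulo `256 ^ 8 = 2 ^ 64`,
which is the plain order on numbers below `2 ^ 64`.
-/

/-- The `k`-th byte (least significant first) of a natural number. -/
def byteKey (k n : ℕ) : ℕ := n / 256 ^ k % 256

/-- Stable sort of a list by a natural-number key (merge sort is stable). -/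
def stableSortBy (f : ℕ → ℕ) (l : List ℕ) : List ℕ :=
  l.mergeSort (fun a b => decide (f a ≤ f b))

namespace List

variable {α β : Type*} [LinearOrder β]

theorem decide_le_comp_trans (f : α → β) (a b c : α) :
    decide (f a ≤ f b) → decide (f b ≤ f c) → decide (f a ≤ f c) := by
  simpa using le_trans

theorem decide_le_comp_total (f : α → β) (a b : α) :
    (decide (f a ≤ f b) || decide (f b ≤ f a)) = true := by
  simpa using le_total (f a) (f b)

theorem filter_mergeSort_key_eq (f : α → β) (l : List α) (c : β) :
    (l.mergeSort (fun a b => f a ≤ f b)).filter (fun a => f a = c) =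
      l.filter (fun a => f a = c) := by
  -- The elements of key `c` are sorted by key, hence a sublist of the sort; filtering that
  -- inclusion gives a sublist of equal length.
  have hsub : l.filter (fun a => f a = c) <+ l.mergeSort (fun a b => f a ≤ f b) :=
    sublist_mergeSort (decide_le_comp_trans f) (decide_le_comp_total f)
      (pairwise_of_forall_mem_list fun a ha b hb => by simp_all) filter_sublist
  have hsub' : l.filter (fun a => f a = c) <+
      (l.mergeSort (fun a b => f a ≤ f b)).filter (fun a => f a = c) := by
    simpa using hsub.filter (fun a => f a = c)
  exact (hsub'.eq_of_length ((mergeSort_perm l _).filter _).length_eq.symm).symm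

theorem pairwise_mergeSort_key_lex {r : α → α → Prop} (f : α → β) {l : List α}
    (hl : l.Pairwise r) :
    (l.mergeSort (fun a b => f a ≤ f b)).Pairwise (fun a b => f a < f b ∨ f a = f b ∧ r a b) := by
  have hsorted := pairwise_mergeSort (decide_le_comp_trans f) (decide_le_comp_total f) l
  refine pairwise_iff_forall_sublist.mpr fun {a b} hab => ?_
  have hle : f a ≤ f b := by simpa using pairwise_pair.mp (hsorted.sublist hab)
  rcases hle.lt_or_eq with hlt | heq
  · exact .inl hlt
  · refine .inr ⟨heq, pairwise_pair.mp (hl.sublist ?_)⟩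
    have := hab.filter (fun x => f x = f b)
    rw [filter_mergeSort_key_eq] at this
    simpa [heq] using this.trans filter_sublist

end List

theorem mod_pow_succ_le_of_lex {B k a b : ℕ}
    (h : a / B ^ k % B < b / B ^ k % B ∨
      a / B ^ k % B = b / B ^ k % B ∧ a % B ^ k ≤ b % B ^ k) :
    a % B ^ (k + 1) ≤ b % B ^ (k + 1) := by
  rw [pow_succ, Nat.mod_mul, Nat.mod_mul]
  rcases h with hlt | ⟨heq, hle⟩
  · have hB : 0 < B ^ k := Nat.pos_of_ne_zero fun h0 => by simp [h0] at hlt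
    calc a % B ^ k + B ^ k * (a / B ^ k % B)
        ≤ B ^ k + B ^ k * (a / B ^ k % B) := Nat.add_le_add_right (Nat.mod_lt a hB).le _
      _ = B ^ k * (a / B ^ k % B + 1) := by ring
      _ ≤ B ^ k * (b / B ^ k % B) := Nat.mul_le_mul_left _ hlt
      _ ≤ b % B ^ k + B ^ k * (b / B ^ k % B) := Nat.le_add_left _ _
  · rw [heq]; omega

def radixPasses (m : ℕ) (l : List ℕ) : List ℕ :=
  (List.range m).foldl (fun acc k => stableSortBy (byteKey k) acc) l

theorem radixPasses_succ (m : ℕ) (l : List ℕ) :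
    radixPasses (m + 1) l = stableSortBy (byteKey m) (radixPasses m l) := by
  simp [radixPasses, List.range_succ]

theorem radixPasses_perm (m : ℕ) (l : List ℕ) : (radixPasses m l).Perm l := by
  induction m with
  | zero => rfl
  | succ m ih => rw [radixPasses_succ]; exact (List.mergeSort_perm _ _).trans ih

theorem pairwise_mod_radixPasses (m : ℕ) (l : List ℕ) :
    (radixPasses m l).Pairwise (fun a b => a % 256 ^ m ≤ b % 256 ^ m) := by
  induction m with
  | zero => simp [radixPasses, Nat.mod_one, List.pairwise_iff_forall_sublist]
  | succ m ih =>
    rw [radixPasses_succ]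
    exact (List.pairwise_mergeSort_key_lex (byteKey m) ih).imp mod_pow_succ_le_of_lex

/-- Radix sort correctness: for a list of naturals `< 2^64`, performing eight
successive stable sorts keyed on bytes `0,…,7` (least significant first)
yields a permutation of the list sorted in nondecreasing order. -/
theorem stmt9 (l : List ℕ) (hl : ∀ n ∈ l, n < 2 ^ 64) :
    let result := (List.range 8).foldl
      (fun acc k => stableSortBy (byteKey k) acc) l
    result.Pairwise (· ≤ ·) ∧ result.Perm l := by
  intro result
  have hperm : result.Perm l := radixPasses_perm 8 l
  refine ⟨(pairwise_mod_radixPasses 8 l).imp_of_mem fun ha hb hab => ?_, hperm⟩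
  have ha := hl _ (hperm.mem_iff.mp ha)
  have hb := hl _ (hperm.mem_iff.mp hb)
  rwa [show (256 : ℕ) ^ 8 = 2 ^ 64 by norm_num, Nat.mod_eq_of_lt ha, Nat.mod_eq_of_lt hb] at hab
end
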